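/- Let f ∈ PL⁻(S¹). Then f is reversed by some h ∈ PL(S¹) that fixes each of the two fixed points of f if and only if f² = id. -/

import Mathlib

open Set Real Filter

/-- A function `ℝ → ℝ` is piecewise linear: its set of break points is locally
finite, and off the break points the function is locally affine. -/
def IsPLFun (f : ℝ → ℝ) : Prop :=
  ∃ B : Set ℝ, (∀ r : ℝ, (B ∩ Set.Icc (-r) r).Finite) ∧
    ∀ x ∉ B, ∃ a b : ℝ, ∀ᶠ y in nhds x, f y = a * y + b

/-- `F : ℝ → ℝ` is a lift of the circle map `f` with degree `k`. -/
def IsLift (f : Circle → Circle) (F : ℝ → ℝ) (k : ℝ) : Prop :=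
  (∀ x : ℝ, f (Circle.exp (2 * π * x)) = Circle.exp (2 * π * F x)) ∧
    ∀ x : ℝ, F (x + 1) = F x + k

/-- orientation-preserving piecewise linear homeomorphism of the circle -/
def PLplus (f : Circle ≃ₜ Circle) : Prop :=
  ∃ F : ℝ → ℝ, StrictMono F ∧ IsPLFun F ∧ IsLift f F 1

/-- orientation-reversing piecewise linear homeomorphism of the circle -/
def PLminus (f : Circle ≃ₜ Circle) : Prop :=
  ∃ F : ℝ → ℝ, StrictAnti F ∧ IsPLFun F ∧ IsLift f F (-1)

/-- piecewise linear homeomorphism of the circle -/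
def PLcirc (f : Circle ≃ₜ Circle) : Prop := PLplus f ∨ PLminus f

/-! Lift `f` to a decreasing `F` with `F (x + 1) = F x - 1`; it has a fixed point `α`. After
replacing `h` by `h ∘ f` if `h` reverses orientation, `h` lifts to an increasing `T` with
`T α = α` and `F ∘ T ∘ F = T`. Then `G = F ∘ F` is an increasing PL map which `T` conjugates to
its inverse, so on `[α, α + 1]` the homeomorphism `T` exchanges `{x | x < G x}` and
`{x | G x < x}`. Their suprema are then swapped by `T`, hence equal, to a fixed point `p` of `G`
approached from the left by both sets. This is impossible, since `G` is affine on a left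
neighbourhood of `p`; so `G = id`. -/

open Topology Function

theorem exists_affine_of_eventually_affine {F : ℝ → ℝ} {s : Set ℝ} (hs : IsPreconnected s)
    (h : ∀ x ∈ s, ∃ a b : ℝ, ∀ᶠ y in 𝓝 x, F y = a * y + b) :
    ∃ a b : ℝ, ∀ x ∈ s, F x = a * x + b := by
  rcases s.eq_empty_or_nonempty with rfl | ⟨x₀, hx₀⟩
  · exact ⟨0, 0, by simp⟩
  let coeff : ℝ → ℝ × ℝ := fun x => (deriv F x, F x - deriv F x * x)
  have hgerm : ∀ x ∈ s, (coeff : Germ (𝓝 x) (ℝ × ℝ)).IsConstant := by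
    intro x hx
    obtain ⟨a, b, hab⟩ := h x hx
    refine ⟨(a, b), ?_⟩
    filter_upwards [hab.eventually_nhds] with y hy
    have hd : deriv F y = a := by
      rw [Filter.EventuallyEq.deriv_eq hy]
      simp
    simp [coeff, hd, hy.self_of_nhds]
  refine ⟨deriv F x₀, F x₀ - deriv F x₀ * x₀, fun x hx => ?_⟩
  have hcoeff := Prod.ext_iff.1 (eq_of_germ_isConstant_on hgerm hs hx hx₀)
  simp only [coeff] at hcoeff
  rw [hcoeff.1] at hcoeff
  linarith [hcoeff.2]

theorem IsPLFun.exists_affine_nhdsLE {F : ℝ → ℝ} (hF : IsPLFun F) (hc : Continuous F) (p : ℝ) :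
    ∃ a b : ℝ, ∀ᶠ y in 𝓝[≤] p, F y = a * y + b := by
  obtain ⟨B, hBfin, hBaff⟩ := hF
  have hB : ∀ᶠ y in 𝓝[<] p, y ∉ B := by
    have hS : IsClosed ((B ∩ Icc (-(|p| + 1)) (|p| + 1)) \ {p}) :=
      ((hBfin _).sdiff).isClosed
    have hI : Icc (-(|p| + 1)) (|p| + 1) ∈ 𝓝 p :=
      Icc_mem_nhds (by linarith [neg_abs_le p]) (by linarith [le_abs_self p])
    filter_upwards [nhdsWithin_le_nhds (hS.isOpen_compl.mem_nhds (by simp)),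
      nhdsWithin_le_nhds hI, self_mem_nhdsWithin] with y hyS hyI hyp hyB
    exact hyS ⟨⟨hyB, hyI⟩, ne_of_lt hyp⟩
  obtain ⟨l, hl, hlB⟩ := mem_nhdsLT_iff_exists_Ioo_subset.1 hB
  obtain ⟨a, b, hab⟩ :=
    exists_affine_of_eventually_affine isPreconnected_Ioo fun x hx => hBaff x (hlB hx)
  have hIcc : Icc l p ⊆ {y | F y = a * y + b} := by
    rw [← closure_Ioo (ne_of_lt hl)]
    exact closure_minimal hab (isClosed_eq hc (by fun_prop))
  exact ⟨a, b, mem_of_superset (Ioc_mem_nhdsLE hl) (Ioc_subset_Icc_self.trans hIcc)⟩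

theorem IsPLFun.comp {f g : ℝ → ℝ} (hg : IsPLFun g) (hf : IsPLFun f) (hfc : Continuous f)
    (hfi : Injective f) : IsPLFun (g ∘ f) := by
  obtain ⟨Bg, hBg, hgaff⟩ := hg
  obtain ⟨Bf, hBf, hfaff⟩ := hf
  refine ⟨Bf ∪ f ⁻¹' Bg, fun r => ?_, fun x hx => ?_⟩
  · obtain ⟨C, hC⟩ := (isCompact_Icc (a := -r) (b := r)).exists_bound_of_continuousOn
      hfc.continuousOn
    rw [union_inter_distrib_right]
    refine (hBf r).union (((hBg C).preimage hfi.injOn).subset ?_)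
    rintro x ⟨hx, hxr⟩
    exact ⟨hx, abs_le.1 (hC x hxr)⟩
  · rw [mem_union, not_or, mem_preimage] at hx
    obtain ⟨a, b, hab⟩ := hfaff x hx.1
    obtain ⟨c, d, hcd⟩ := hgaff (f x) hx.2
    refine ⟨c * a, c * b + d, ?_⟩
    filter_upwards [hab, hfc.continuousAt.eventually hcd] with y hfy hgy
    rw [comp_apply, hgy, hfy]
    ring

theorem eventually_le_of_frequently_lt {G : ℝ → ℝ} {p a b : ℝ}
    (haff : ∀ᶠ y in 𝓝[≤] p, G y = a * y + b) (hp : G p = p)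
    (hfreq : ∃ᶠ y in 𝓝[≤] p, y < G y) : ∀ᶠ y in 𝓝[≤] p, y ≤ G y := by
  have hGp : G p = a * p + b := haff.self_of_nhdsWithin self_mem_Iic
  obtain ⟨y₀, hy₀, hGy₀, hy₀p : y₀ ≤ p⟩ :=
    (hfreq.and_eventually (haff.and self_mem_nhdsWithin)).exists
  have ha : a < 1 := by nlinarith
  filter_upwards [haff, self_mem_nhdsWithin] with y hGy (hyp : y ≤ p)
  nlinarith

theorem OrderIso.isLUB_of_image_swap {α : Type*} [LinearOrder α] (T : α ≃o α) {U V : Set α}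
    {p : α} (hp : IsLUB U p) (hUV : T '' U = V) (hVU : T '' V = U) : IsLUB V p := by
  have hq : IsLUB V (T p) := hUV ▸ T.isLUB_image'.2 hp
  have hTTp : T (T p) = p := (hVU ▸ T.isLUB_image'.2 hq).unique hp
  suffices T p = p by rwa [this] at hq
  rcases le_total (T p) p with h | h
  · exact le_antisymm h (by simpa [hTTp] using T.monotone h)
  · exact le_antisymm (by simpa [hTTp] using T.monotone h) h

theorem OrderIso.image_sep_Icc (T : ℝ ≃o ℝ) {a b : ℝ} (ha : T a = a) (hb : T b = b)
    {P Q : ℝ → Prop} (hPQ : ∀ x, Q (T x) ↔ P x) :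
    T '' {x ∈ Icc a b | P x} = {x ∈ Icc a b | Q x} := by
  ext y
  obtain ⟨x, rfl⟩ := T.surjective y
  have hI : T x ∈ Icc a b ↔ x ∈ Icc a b := by
    conv_lhs => rw [← ha, ← hb]
    simp only [mem_Icc, T.le_iff_le]
  rw [T.injective.mem_set_image, mem_ofPred_eq, mem_ofPred_eq, hI, hPQ]

section Conjugation

variable {G : ℝ → ℝ} {T : ℝ ≃o ℝ}

theorem apply_lt_self_of_conj (hG : StrictMono G) (hGT : ∀ x, G (T (G x)) = T x) {x : ℝ}
    (hx : x < G x) : G (T x) < T x :=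
  calc G (T x) < G (T (G x)) := hG (T.strictMono hx)
    _ = T x := hGT x

theorem lt_apply_self_of_conj (hG : StrictMono G) (hGT : ∀ x, G (T (G x)) = T x) {x : ℝ}
    (hx : G x < x) : T x < G (T x) :=
  calc T x = G (T (G x)) := (hGT x).symm
    _ < G (T x) := hG (T.strictMono hx)

theorem apply_eq_self_of_conj (hGT : ∀ x, G (T (G x)) = T x) {x : ℝ} (hx : G x = x) :
    G (T x) = T x := by
  simpa [hx] using hGT x

theorem apply_lt_self_iff_of_conj (hG : StrictMono G) (hGT : ∀ x, G (T (G x)) = T x) (x : ℝ) :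
    G (T x) < T x ↔ x < G x := by
  refine ⟨fun h => ?_, apply_lt_self_of_conj hG hGT⟩
  rcases lt_trichotomy x (G x) with hx | hx | hx
  · exact hx
  · exact absurd (apply_eq_self_of_conj hGT hx.symm) (ne_of_lt h)
  · exact absurd h (lt_apply_self_of_conj hG hGT hx).asymm

theorem lt_apply_self_iff_of_conj (hG : StrictMono G) (hGT : ∀ x, G (T (G x)) = T x) (x : ℝ) :
    T x < G (T x) ↔ G x < x := by
  refine ⟨fun h => ?_, lt_apply_self_of_conj hG hGT⟩
  rcases lt_trichotomy x (G x) with hx | hx | hx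
  · exact absurd h (apply_lt_self_of_conj hG hGT hx).asymm
  · exact absurd (apply_eq_self_of_conj hGT hx.symm).symm (ne_of_lt h)
  · exact hx

theorem eqOn_id_of_conj (hG : StrictMono G) (hGc : Continuous G) (hGpl : IsPLFun G)
    (hGT : ∀ x, G (T (G x)) = T x) {a b : ℝ} (ha : T a = a) (hb : T b = b) :
    EqOn G id (Icc a b) := by
  intro x hx
  by_contra hGx
  set U := {x ∈ Icc a b | x < G x}
  set V := {x ∈ Icc a b | G x < x}
  have hUV : T '' U = V := T.image_sep_Icc ha hb (apply_lt_self_iff_of_conj hG hGT)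
  have hVU : T '' V = U := T.image_sep_Icc ha hb (lt_apply_self_iff_of_conj hG hGT)
  have hU : U.Nonempty := by
    rcases lt_or_gt_of_ne hGx with h | h
    · exact hVU ▸ (show V.Nonempty from ⟨x, hx, h⟩).image T
    · exact ⟨x, hx, h⟩
  have hV : V.Nonempty := hUV ▸ hU.image T
  have hpU : IsLUB U (sSup U) := isLUB_csSup hU ⟨b, fun y hy => hy.1.2⟩
  have hpV : IsLUB V (sSup U) := T.isLUB_of_image_swap hpU hUV hVU
  have hGp : G (sSup U) = sSup U := le_antisymm
    (closure_minimal (fun y hy => le_of_lt hy.2) (isClosed_le hGc continuous_id)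
      (hpV.mem_closure hV))
    (closure_minimal (fun y hy => le_of_lt hy.2) (isClosed_le continuous_id hGc)
      (hpU.mem_closure hU))
  obtain ⟨c, d, hcd⟩ := hGpl.exists_affine_nhdsLE hGc (sSup U)
  have hle := eventually_le_of_frequently_lt hcd hGp
    ((hpU.frequently_mem hU).mono fun y hy => hy.2)
  obtain ⟨y, hyV, hy⟩ := ((hpV.frequently_mem hV).and_eventually hle).exists
  exact not_le_of_gt hyV.2 hy

end Conjugation

theorem comp_self_eq_id_of_conj {F T : ℝ → ℝ} (hF : StrictAnti F) (hFc : Continuous F)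
    (hFpl : IsPLFun F) (hFper : ∀ x, F (x + 1) = F x - 1) (hT : StrictMono T)
    (hTs : Surjective T) (hTper : ∀ x, T (x + 1) = T x + 1) {α : ℝ} (hTα : T α = α)
    (hFT : ∀ x, F (T (F x)) = T x) (x : ℝ) : F (F x) = x := by
  let T' := hT.orderIsoOfSurjective T hTs
  have hGT : ∀ y, (F ∘ F) (T' ((F ∘ F) y)) = T' y := fun y => by
    simp only [T', StrictMono.coe_orderIsoOfSurjective, comp_apply, hFT]
  have hid := eqOn_id_of_conj (hF.comp hF) (hFc.comp hFc) (hFpl.comp hFpl hFc hF.injective) hGT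
    (a := α) (b := α + 1) hTα (by simp [T', hTper, hTα])
  have hper : Periodic (fun y => F (F y) - y) 1 := fun y => by
    have := hFper (F y - 1)
    rw [sub_add_cancel] at this
    simp only [hFper]
    linarith
  obtain ⟨y, hy, hxy⟩ := hper.exists_mem_Ico one_pos x α
  have hFFy := hid (Ico_subset_Icc_self hy)
  simp only [comp_apply, id] at hFFy hxy
  linarith

theorem apply_add_int_of_apply_add_one {F : ℝ → ℝ} {k : ℝ} (h : ∀ x, F (x + 1) = F x + k)
    (n : ℤ) (x : ℝ) : F (x + n) = F x + n * k := by
  have hper : Periodic (fun x => F x - k * x) 1 := fun x => by simp only [h]; ring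
  have := hper.int_mul n x
  simp only [mul_one] at this
  linear_combination this

theorem circleExp_two_pi_mul_eq_iff {u v : ℝ} :
    Circle.exp (2 * π * u) = Circle.exp (2 * π * v) ↔ ∃ n : ℤ, u = v + n := by
  rw [Circle.exp_eq_exp]
  exact exists_congr fun n =>
    ⟨fun h => mul_left_cancel₀ two_pi_pos.ne' (by rw [h]; ring), fun h => by rw [h]; ring⟩

theorem exists_circleExp_two_pi_mul (z : Circle) : ∃ x : ℝ, Circle.exp (2 * π * x) = z := by
  obtain ⟨t, rfl⟩ := Circle.exp_surjective z
  exact ⟨t / (2 * π), by rw [mul_div_cancel₀ _ two_pi_pos.ne']⟩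

theorem eq_of_circleExp_eq {F G : ℝ → ℝ} (hF : Continuous F) (hG : Continuous G)
    (h : ∀ x, Circle.exp (2 * π * F x) = Circle.exp (2 * π * G x)) {x₀ : ℝ}
    (h₀ : F x₀ = G x₀) : F = G := by
  have := Circle.isCoveringMap_exp.eq_of_comp_eq (g₁ := fun x => 2 * π * F x)
    (g₂ := fun x => 2 * π * G x) (by fun_prop) (by fun_prop) (funext h) x₀ (by simp [h₀])
  funext x
  exact mul_left_cancel₀ two_pi_pos.ne' (congrFun this x)

theorem IsLift.surjective {f : Circle → Circle} {F : ℝ → ℝ} {k : ℝ} (hF : IsLift f F k)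
    (hf : Surjective f) (hk : k = 1 ∨ k = -1) : Surjective F := by
  intro y
  obtain ⟨w, hw⟩ := hf (Circle.exp (2 * π * y))
  obtain ⟨t, rfl⟩ := exists_circleExp_two_pi_mul w
  obtain ⟨n, hn⟩ := circleExp_two_pi_mul_eq_iff.1 ((hF.1 t).symm.trans hw)
  rcases hk with rfl | rfl
  · exact ⟨t + (-n : ℤ), by rw [apply_add_int_of_apply_add_one hF.2, hn]; push_cast; ring⟩
  · exact ⟨t + n, by rw [apply_add_int_of_apply_add_one hF.2, hn]; ring⟩

theorem IsLift.sub_int {f : Circle → Circle} {F : ℝ → ℝ} {k : ℝ} (hF : IsLift f F k) (n : ℤ) :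
    IsLift f (fun x => F x - n) k :=
  ⟨fun x => (hF.1 x).trans (circleExp_two_pi_mul_eq_iff.2 ⟨n, by ring⟩),
    fun x => by simp only [hF.2]; ring⟩

theorem Antitone.continuous_of_surjective {F : ℝ → ℝ} (hF : Antitone F) (hs : Surjective F) :
    Continuous F := by
  have : Continuous fun x => -F x :=
    Monotone.continuous_of_surjective (fun a b h => neg_le_neg (hF h))
      fun y => (hs (-y)).imp fun x hx => by simp [hx]
  convert this.neg using 1
  exact funext fun x => (neg_neg (F x)).symm

theorem Antitone.exists_apply_eq_self {F : ℝ → ℝ} (hF : Antitone F) (hc : Continuous F) :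
    ∃ x, F x = x := by
  obtain ⟨x, hx⟩ := intermediate_value_univ (min 0 (F 0)) (max 0 (F 0))
    (f := fun x => x - F x) (by fun_prop)
    (show (0 : ℝ) ∈ Icc _ _ from
      ⟨by linarith [hF (min_le_left 0 (F 0)), min_le_right 0 (F 0)],
        by linarith [hF (le_max_left 0 (F 0)), le_max_right 0 (F 0)]⟩)
  exact ⟨x, by linarith⟩

theorem exists_orientationPreserving_reverser {f h : Circle ≃ₜ Circle} {F : ℝ → ℝ}
    (hF : StrictAnti F) (hFl : IsLift f F (-1)) (hh : PLcirc h) (hrev : ∀ z, f (h (f z)) = h z)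
    {α : ℝ} (hα : F α = α) (hhα : h (Circle.exp (2 * π * α)) = Circle.exp (2 * π * α)) :
    ∃ (g : Circle → Circle) (T : ℝ → ℝ), Surjective g ∧ StrictMono T ∧ IsLift g T 1 ∧
      g (Circle.exp (2 * π * α)) = Circle.exp (2 * π * α) ∧ ∀ z, f (g (f z)) = g z := by
  rcases hh with ⟨H, hH, -, hHl⟩ | ⟨H, hH, -, hHl⟩
  · exact ⟨h, H, h.surjective, hH, hHl, hhα, hrev⟩
  · refine ⟨h ∘ f, H ∘ F, h.surjective.comp f.surjective, hH.comp hF,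
      ⟨fun x => by simp [hFl.1, hHl.1], fun x => ?_⟩, by simp [hFl.1, hα, hhα],
      fun z => hrev (f z)⟩
    have := apply_add_int_of_apply_add_one hHl.2 (-1) (F x)
    push_cast at this
    simp only [comp_apply, hFl.2]
    linarith

theorem exists_strictMono_reversing_lift {f h : Circle ≃ₜ Circle} {F : ℝ → ℝ}
    (hF : StrictAnti F) (hFc : Continuous F) (hFl : IsLift f F (-1)) (hh : PLcirc h)
    (hrev : ∀ z, f (h (f z)) = h z) {α : ℝ} (hα : F α = α)
    (hhα : h (Circle.exp (2 * π * α)) = Circle.exp (2 * π * α)) :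
    ∃ T : ℝ → ℝ, StrictMono T ∧ Surjective T ∧ (∀ x, T (x + 1) = T x + 1) ∧ T α = α ∧
      ∀ x, F (T (F x)) = T x := by
  obtain ⟨g, T₀, hgs, hT₀, hT₀l, hgα, hgrev⟩ :=
    exists_orientationPreserving_reverser hF hFl hh hrev hα hhα
  obtain ⟨n, hn⟩ := circleExp_two_pi_mul_eq_iff.1 ((hT₀l.1 α).symm.trans hgα)
  set T : ℝ → ℝ := fun x => T₀ x - n
  have hTl : IsLift g T 1 := hT₀l.sub_int n
  have hT : StrictMono T := fun a b hab => sub_lt_sub_right (hT₀ hab) _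
  have hTs := hTl.surjective hgs (Or.inl rfl)
  have hTc := hT.monotone.continuous_of_surjective hTs
  have hTα : T α = α := by simp only [T, hn]; ring
  refine ⟨T, hT, hTs, hTl.2, hTα, congrFun (eq_of_circleExp_eq (x₀ := α)
    (hFc.comp (hTc.comp hFc)) hTc (fun x => ?_) (by rw [hα, hTα, hα]))⟩
  rw [← hFl.1, ← hTl.1, ← hFl.1, hgrev, hTl.1]

/-- Let `f ∈ PL⁻(S¹)` (such a map has exactly two fixed points).  Then `f` is
reversed by some `h ∈ PL(S¹)` fixing each fixed point of `f` if and only if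
`f² = id`.  (Reversibility `h f h⁻¹ = f⁻¹` is expressed as `f ∘ h ∘ f = h`.) -/
theorem reversed_fixing_fixed_points_iff_involution (f : Circle ≃ₜ Circle)
    (hf : PLminus f) :
    (∃ h : Circle ≃ₜ Circle, PLcirc h ∧ (∀ z : Circle, f z = z → h z = z) ∧
        ∀ z : Circle, f (h (f z)) = h z) ↔
      ∀ z : Circle, f (f z) = z := by
  refine ⟨fun ⟨h, hh, hfix, hrev⟩ => ?_,
    fun hinv => ⟨f, Or.inr hf, fun z hz => hz, fun z => hinv (f z)⟩⟩
  obtain ⟨F, hF, hFpl, hFl⟩ := hf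
  have hFc := hF.antitone.continuous_of_surjective (hFl.surjective f.surjective (Or.inr rfl))
  have hFper : ∀ x, F (x + 1) = F x - 1 := fun x => by rw [hFl.2]; ring
  obtain ⟨α, hα⟩ := hF.antitone.exists_apply_eq_self hFc
  obtain ⟨T, hT, hTs, hTper, hTα, hFT⟩ :=
    exists_strictMono_reversing_lift hF hFc hFl hh hrev hα (hfix _ (by rw [hFl.1, hα]))
  intro z
  obtain ⟨x, rfl⟩ := exists_circleExp_two_pi_mul z
  rw [hFl.1, hFl.1, comp_self_eq_id_of_conj hF hFc hFpl hFper hT hTs hTper hTα hFT]
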